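/- arXiv:1802.00531 — 4 statements merged into one kernel-verified Lean document; each statement's English description precedes it below -/
import Mathlib

section
/- For any positive integer n, the sum over all units a of Z/nZ of gcd(a-1, n) equals φ(n)·σ₀(n), where φ is Euler's totient function and σ₀(n) is the number of divisors of n. -/
/-!
Expanding `gcd(a - 1, n) = ∑_{d ∣ gcd(a - 1, n)} φ(d)` and swapping the sums, the divisor `d ∣ n`
contributes `φ(d)` times the number of units `a ≡ 1 (mod d)`. These units form the kernel of the
surjection `(ℤ/nℤ)ˣ → (ℤ/dℤ)ˣ`, which has `φ(n) / φ(d)` elements, so each divisor contributes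
exactly `φ(n)`.
-/

open Finset

theorem Nat.gcd_eq_sum_totient_filter_dvd {n : ℕ} (hn : n ≠ 0) (x : ℕ) :
    Nat.gcd x n = ∑ d ∈ n.divisors with d ∣ x, Nat.totient d := by
  have hfilter : {d ∈ n.divisors | d ∣ x} = (Nat.gcd x n).divisors := by
    rw [← Nat.divisors_filter_dvd_of_dvd hn (Nat.gcd_dvd_right x n)]
    refine filter_congr fun d hd => ?_
    exact ⟨fun h => Nat.dvd_gcd h (Nat.dvd_of_mem_divisors hd),
      fun h => h.trans (Nat.gcd_dvd_left x n)⟩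
  rw [hfilter, Nat.sum_totient]

namespace ZMod

variable {n d : ℕ} [NeZero n]

theorem dvd_val_iff_castHom_eq_zero (hd : d ∣ n) (x : ZMod n) :
    d ∣ x.val ↔ castHom hd (ZMod d) x = 0 := by
  rw [castHom_apply, cast_eq_val, natCast_eq_zero_iff]

theorem dvd_val_sub_one_iff_mem_ker_unitsMap (hd : d ∣ n) (a : (ZMod n)ˣ) :
    d ∣ ((a : ZMod n) - 1).val ↔ a ∈ (unitsMap hd).ker := by
  rw [dvd_val_iff_castHom_eq_zero hd, map_sub, map_one, sub_eq_zero, MonoidHom.mem_ker,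
    Units.ext_iff]
  rfl

theorem totient_mul_card_ker_unitsMap (hd : d ∣ n) :
    Nat.totient d * Nat.card (unitsMap hd).ker = Nat.totient n := by
  have : NeZero d := ⟨fun h => NeZero.ne n (Nat.eq_zero_of_zero_dvd (h ▸ hd))⟩
  have hcard := Subgroup.card_mul_index (unitsMap hd).ker
  rw [Subgroup.index_ker, MonoidHom.range_eq_top_of_surjective _ (unitsMap_surjective hd),
    Subgroup.card_top] at hcard
  simpa only [Nat.card_eq_fintype_card, card_units_eq_totient, mul_comm] using hcard

theorem totient_mul_card_units_eq_one_mod (hd : d ∣ n) :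
    Nat.totient d * #{a : (ZMod n)ˣ | d ∣ ((a : ZMod n) - 1).val} = Nat.totient n := by
  rw [← totient_mul_card_ker_unitsMap hd, ← Fintype.card_subtype, ← Nat.card_eq_fintype_card]
  exact congrArg _ (Nat.card_congr
    (Equiv.subtypeEquivRight (dvd_val_sub_one_iff_mem_ker_unitsMap hd)))

end ZMod

/-- Menon's identity: for a positive integer `n`,
`∑_{a ∈ (ℤ/nℤ)*} gcd(a-1, n) = φ(n) · σ₀(n)`. -/
theorem menon_identity (n : ℕ) [NeZero n] :
    ∑ a : (ZMod n)ˣ, Nat.gcd ((a : ZMod n) - 1).val n =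
      Nat.totient n * ArithmeticFunction.sigma 0 n := by
  calc ∑ a : (ZMod n)ˣ, Nat.gcd ((a : ZMod n) - 1).val n
      = ∑ a : (ZMod n)ˣ, ∑ d ∈ n.divisors with d ∣ ((a : ZMod n) - 1).val, Nat.totient d := by
        simp_rw [Nat.gcd_eq_sum_totient_filter_dvd (NeZero.ne n)]
    _ = ∑ d ∈ n.divisors, Nat.totient d * #{a : (ZMod n)ˣ | d ∣ ((a : ZMod n) - 1).val} := by
        simp_rw [sum_filter, card_filter, mul_sum, mul_ite, mul_one, mul_zero]
        exact sum_comm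
    _ = ∑ _d ∈ n.divisors, Nat.totient n :=
        sum_congr rfl fun _d hd =>
          ZMod.totient_mul_card_units_eq_one_mod (Nat.dvd_of_mem_divisors hd)
    _ = Nat.totient n * ArithmeticFunction.sigma 0 n := by
        rw [sum_const, smul_eq_mul, ArithmeticFunction.sigma_zero_apply, mul_comm]
end

section
/- Let n be a positive integer and χ a Dirichlet character modulo n with conductor d. Then ∑_{a ∈ (Z/nZ)*} gcd(a-1, n)·χ(a) = φ(n)·σ₀(n/d). -/
/-!
Write `gcd(a - 1, n) = ∑ φ(e)` over the divisors `e ∣ n` with `e ∣ a - 1` and swap the sums.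
For fixed `e` the units with `e ∣ a - 1` form the kernel of `(ℤ/nℤ)ˣ → (ℤ/eℤ)ˣ`, of order
`φ(n) / φ(e)`, and the sum of `χ` over it is that order if `χ` is trivial on it, i.e. if `χ`
factors through `e`, i.e. if `d ∣ e`, and `0` otherwise. So each of the `σ₀(n / d)` divisors of `n`
that are multiples of `d` contributes `φ(n)`.
-/

open Finset
open scoped Nat

theorem Nat.sum_totient_filter_divisors {n : ℕ} (hn : n ≠ 0) (a : ℕ) :
    ∑ e ∈ n.divisors with e ∣ a, φ e = Nat.gcd a n := by
  rw [← Nat.sum_totient (Nat.gcd a n),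
    ← Nat.divisors_filter_dvd_of_dvd hn (Nat.gcd_dvd_right a n)]
  refine sum_congr (filter_congr fun e he => ?_) fun _ _ => rfl
  rw [Nat.dvd_gcd_iff, and_iff_left (Nat.dvd_of_mem_divisors he)]

theorem Nat.card_filter_dvd_divisors {n d : ℕ} (hn : n ≠ 0) (hd : d ∣ n) :
    #{e ∈ n.divisors | d ∣ e} = #(n / d).divisors := by
  have hd0 : d ≠ 0 := ne_zero_of_dvd_ne_zero hn hd
  refine card_bij' (fun e _ => e / d) (fun k _ => d * k) (fun e he => ?_) (fun k hk => ?_)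
    (fun e he => Nat.mul_div_cancel' (mem_filter.mp he).2)
    (fun k _ => Nat.mul_div_cancel_left k (Nat.pos_of_ne_zero hd0))
  · obtain ⟨he, hde⟩ := mem_filter.mp he
    exact Nat.mem_divisors.mpr ⟨Nat.div_dvd_div hde (Nat.dvd_of_mem_divisors he),
      (Nat.div_ne_zero_iff_of_dvd hd).mpr ⟨hn, hd0⟩⟩
  · exact mem_filter.mpr ⟨Nat.mem_divisors.mpr
      ⟨(Nat.dvd_div_iff_mul_dvd hd).mp (Nat.dvd_of_mem_divisors hk), hn⟩, Dvd.intro _ rfl⟩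

namespace ZMod

variable {n d : ℕ} [NeZero n]

theorem unitsMap_eq_one_iff_dvd_val_sub_one (hd : d ∣ n) (u : (ZMod n)ˣ) :
    unitsMap hd u = 1 ↔ d ∣ ((u : ZMod n) - 1).val := by
  rw [← Units.val_inj, unitsMap_val, Units.val_one, ← sub_eq_zero, ← natCast_eq_zero_iff,
    natCast_val, cast_sub hd, cast_one hd]

theorem card_ker_unitsMap_mul_totient (hd : d ∣ n) :
    Nat.card (unitsMap hd).ker * φ d = φ n := by
  have : NeZero d := ⟨ne_zero_of_dvd_ne_zero (NeZero.ne n) hd⟩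
  rw [← card_units_eq_totient, ← card_units_eq_totient, ← Nat.card_eq_fintype_card,
    ← Nat.card_eq_fintype_card, ← Subgroup.card_top (G := (ZMod d)ˣ),
    ← MonoidHom.range_eq_top.mpr (unitsMap_surjective hd), ← Subgroup.index_ker,
    Subgroup.card_mul_index]

end ZMod

namespace DirichletCharacter

variable {R : Type*} [CommRing R] {n d : ℕ} [NeZero n] (χ : DirichletCharacter R n)

theorem sum_ker_unitsMap_of_factorsThrough (hd : d ∣ n) (hχ : χ.FactorsThrough d) :
    ∑ a : (ZMod.unitsMap hd).ker, χ (a : (ZMod n)ˣ) = Nat.card (ZMod.unitsMap hd).ker := by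
  rw [factorsThrough_iff_ker_unitsMap hd] at hχ
  have hone (a : (ZMod.unitsMap hd).ker) : χ (a : (ZMod n)ˣ) = 1 := by
    simpa [Units.ext_iff] using hχ a.2
  simp [hone, Nat.card_eq_fintype_card]

theorem sum_ker_unitsMap_of_not_factorsThrough [IsDomain R] (hd : d ∣ n)
    (hχ : ¬ χ.FactorsThrough d) :
    ∑ a : (ZMod.unitsMap hd).ker, χ (a : (ZMod n)ˣ) = 0 := by
  rw [factorsThrough_iff_ker_unitsMap hd, SetLike.not_le_iff_exists] at hχ
  obtain ⟨b, hb, hbχ⟩ := hχ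
  refine sum_hom_units_eq_zero
    ((Units.coeHom R).comp (χ.toUnitHom.comp (ZMod.unitsMap hd).ker.subtype)) fun h => hbχ ?_
  simpa [Units.ext_iff] using DFunLike.congr_fun h ⟨b, hb⟩

theorem totient_mul_sum_dvd_val_sub_one [IsDomain R] (hd : d ∣ n) :
    (φ d : R) * ∑ a ∈ univ.filter fun a : (ZMod n)ˣ => d ∣ ((a : ZMod n) - 1).val, χ a =
      if χ.conductor ∣ d then (φ n : R) else 0 := by
  have hker : ∑ a ∈ univ.filter fun a : (ZMod n)ˣ => d ∣ ((a : ZMod n) - 1).val, χ a =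
      ∑ a : (ZMod.unitsMap hd).ker, χ (a : (ZMod n)ˣ) :=
    sum_subtype _ (fun a => by simp [ZMod.unitsMap_eq_one_iff_dvd_val_sub_one]) _
  have hχ : χ.FactorsThrough d ↔ χ.conductor ∣ d := mem_conductorSet_iff_conductor_dvd χ hd
  rw [hker]
  split_ifs with hdvd
  · rw [sum_ker_unitsMap_of_factorsThrough χ hd (hχ.mpr hdvd), ← Nat.cast_mul, mul_comm,
      ZMod.card_ker_unitsMap_mul_totient]
  · rw [sum_ker_unitsMap_of_not_factorsThrough χ hd (mt hχ.mp hdvd), mul_zero]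

end DirichletCharacter

/-- Zhao–Cao identity: for a Dirichlet character `χ` mod `n` with conductor `d`,
`∑_{a ∈ (ℤ/nℤ)*} gcd(a-1, n) · χ(a) = φ(n) · σ₀(n/d)`. -/
theorem zhao_cao_identity (n : ℕ) [NeZero n] (χ : DirichletCharacter ℂ n) :
    ∑ a : (ZMod n)ˣ, (Nat.gcd ((a : ZMod n) - 1).val n : ℂ) * χ a =
      (Nat.totient n * ArithmeticFunction.sigma 0 (n / χ.conductor) : ℕ) := by
  have hn : n ≠ 0 := NeZero.ne n
  calc ∑ a : (ZMod n)ˣ, (Nat.gcd ((a : ZMod n) - 1).val n : ℂ) * χ a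
      = ∑ a : (ZMod n)ˣ, ∑ e ∈ n.divisors,
          if e ∣ ((a : ZMod n) - 1).val then (φ e : ℂ) * χ a else 0 := by
        simp_rw [← Nat.sum_totient_filter_divisors hn, Nat.cast_sum, sum_mul, sum_filter]
    _ = ∑ e ∈ n.divisors, (φ e : ℂ) *
          ∑ a ∈ univ.filter fun a : (ZMod n)ˣ => e ∣ ((a : ZMod n) - 1).val, χ a := by
        rw [sum_comm]
        simp_rw [mul_sum, sum_filter]
    _ = ∑ e ∈ n.divisors with χ.conductor ∣ e, (φ n : ℂ) := by
        rw [sum_filter]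
        exact sum_congr rfl fun e he =>
          χ.totient_mul_sum_dvd_val_sub_one (Nat.dvd_of_mem_divisors he)
    _ = _ := by
        rw [sum_const, Nat.card_filter_dvd_divisors hn χ.conductor_dvd_level,
          ArithmeticFunction.sigma_zero_apply, nsmul_eq_mul]
        push_cast
        ring
end

section
/- Let n = n₁·n₂ with gcd(n₁, n₂) = 1, and let χ be a Dirichlet character modulo n, written χ = χ₁·χ₂ with χᵢ a Dirichlet character modulo nᵢ (via the Chinese remainder theorem). Define S_χ(n,k) = ∑_{a ∈ (Z/nZ)*} ∑_{b₁,...,b_k ∈ Z/nZ} gcd(a-1, b₁, ..., b_k, n)·χ(a). Then S_χ(n,k) = S_{χ₁}(n₁,k)·S_{χ₂}(n₂,k). -/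
/-!
By the Chinese remainder theorem, `a ↦ (a mod n₁, a mod n₂)` identifies `(ℤ/n₁n₂)ˣ` with
`(ℤ/n₁)ˣ × (ℤ/n₂)ˣ` and `b ↦ (b mod n₁, b mod n₂)` identifies `(ℤ/n₁n₂)ᵏ` with `(ℤ/n₁)ᵏ × (ℤ/n₂)ᵏ`.
Under these bijections the summand factors: `χ = χ₁ χ₂` by hypothesis, and
`gcd(g, n₁n₂) = gcd(g, n₁) · gcd(g, n₂)` for `g = gcd(a - 1, b₁, …, b_k)`, where `gcd(g, nᵢ)` only
depends on the residues modulo `nᵢ`. So the double sum splits as a product.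
-/

open Finset

theorem Fintype.sum_eq_mul_of_equiv_prod {α β γ R : Type*} [Fintype α] [Fintype β] [Fintype γ]
    [NonUnitalNonAssocSemiring R] (e : α ≃ β × γ) {f : α → R} {g : β → R} {h : γ → R}
    (hf : ∀ x, f x = g (e x).1 * h (e x).2) :
    ∑ x, f x = (∑ y, g y) * ∑ z, h z := by
  rw [Fintype.sum_mul_sum, ← Fintype.sum_prod_type']
  exact Fintype.sum_equiv e _ _ hf

theorem ZMod.val_cast_eq_val_mod {n d : ℕ} [NeZero n] (x : ZMod n) :
    (x.cast : ZMod d).val = x.val % d := by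
  rw [← ZMod.natCast_val, ZMod.val_natCast]

theorem ZMod.chineseRemainder_fst {m n : ℕ} (h : m.Coprime n) (x : ZMod (m * n)) :
    (ZMod.chineseRemainder h x).1 = x.cast :=
  Prod.fst_zmod_cast x

theorem ZMod.chineseRemainder_snd {m n : ℕ} (h : m.Coprime n) (x : ZMod (m * n)) :
    (ZMod.chineseRemainder h x).2 = x.cast :=
  Prod.snd_zmod_cast x

namespace Menon

variable {n : ℕ} {ι : Type*} [Fintype ι]

def gcdWithModulus (x : ZMod n) (b : ι → ZMod n) : ℕ :=
  Nat.gcd x.val (Nat.gcd (univ.gcd fun i => (b i).val) n)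

theorem dvd_gcdWithModulus_iff {x : ZMod n} {b : ι → ZMod n} {e : ℕ} :
    e ∣ gcdWithModulus x b ↔ e ∣ x.val ∧ (∀ i, e ∣ (b i).val) ∧ e ∣ n := by
  simp [gcdWithModulus, Nat.dvd_gcd_iff, Finset.dvd_gcd_iff]

theorem gcdWithModulus_dvd (x : ZMod n) (b : ι → ZMod n) : gcdWithModulus x b ∣ n :=
  (dvd_gcdWithModulus_iff.mp dvd_rfl).2.2

theorem gcdWithModulus_cast [NeZero n] {d : ℕ} (hd : d ∣ n) (x : ZMod n)
    (b : ι → ZMod n) :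
    gcdWithModulus (x.cast : ZMod d) (fun i => (b i).cast) = Nat.gcd (gcdWithModulus x b) d := by
  refine Nat.dvd_left_iff_eq.mp fun e => ?_
  simp only [dvd_gcdWithModulus_iff, Nat.dvd_gcd_iff, ZMod.val_cast_eq_val_mod]
  constructor
  · rintro ⟨hx, hb, he⟩
    exact ⟨⟨(Nat.dvd_mod_iff he).mp hx, fun i => (Nat.dvd_mod_iff he).mp (hb i), he.trans hd⟩, he⟩
  · rintro ⟨⟨hx, hb, -⟩, he⟩
    exact ⟨(Nat.dvd_mod_iff he).mpr hx, fun i => (Nat.dvd_mod_iff he).mpr (hb i), he⟩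

theorem gcdWithModulus_mul {n₁ n₂ : ℕ} [NeZero n₁] [NeZero n₂] (hco : n₁.Coprime n₂)
    (x : ZMod (n₁ * n₂)) (b : ι → ZMod (n₁ * n₂)) :
    gcdWithModulus x b =
      gcdWithModulus (x.cast : ZMod n₁) (fun i => (b i).cast) *
        gcdWithModulus (x.cast : ZMod n₂) (fun i => (b i).cast) := by
  rw [gcdWithModulus_cast (dvd_mul_right n₁ n₂), gcdWithModulus_cast (dvd_mul_left n₂ n₁),
    ← Nat.Coprime.gcd_mul _ hco, Nat.gcd_eq_left (gcdWithModulus_dvd x b)]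

variable {R : Type*} [CommRing R]

variable (ι) [DecidableEq ι] in
def menonSum (n : ℕ) [NeZero n] (χ : DirichletCharacter R n) : R :=
  ∑ a : (ZMod n)ˣ, ∑ b : ι → ZMod n, (gcdWithModulus ((a : ZMod n) - 1) b : R) * χ a

theorem apply_units_eq_mul_of_natCast {n₁ n₂ : ℕ} [NeZero n₁] [NeZero n₂]
    {χ : DirichletCharacter R (n₁ * n₂)} {χ₁ : DirichletCharacter R n₁}
    {χ₂ : DirichletCharacter R n₂}
    (hdec : ∀ c : ℕ, c.Coprime (n₁ * n₂) → χ c = χ₁ c * χ₂ c) (a : (ZMod (n₁ * n₂))ˣ) :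
    χ a = χ₁ (a : ZMod (n₁ * n₂)).cast * χ₂ (a : ZMod (n₁ * n₂)).cast := by
  have := hdec (a : ZMod (n₁ * n₂)).val (ZMod.val_coe_unit_coprime a)
  rwa [ZMod.natCast_zmod_val, ZMod.natCast_val, ZMod.natCast_val] at this

theorem menonSum_mul [DecidableEq ι] {n₁ n₂ : ℕ} [NeZero n₁] [NeZero n₂] (hco : n₁.Coprime n₂)
    {χ : DirichletCharacter R (n₁ * n₂)} {χ₁ : DirichletCharacter R n₁}
    {χ₂ : DirichletCharacter R n₂}
    (hχ : ∀ a : (ZMod (n₁ * n₂))ˣ,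
      χ a = χ₁ (a : ZMod (n₁ * n₂)).cast * χ₂ (a : ZMod (n₁ * n₂)).cast) :
    menonSum ι (n₁ * n₂) χ = menonSum ι n₁ χ₁ * menonSum ι n₂ χ₂ := by
  let crt := ZMod.chineseRemainder hco
  let unitsEquiv : (ZMod (n₁ * n₂))ˣ ≃ (ZMod n₁)ˣ × (ZMod n₂)ˣ :=
    ((Units.mapEquiv crt.toMulEquiv).trans MulEquiv.prodUnits).toEquiv
  let tupleEquiv : (ι → ZMod (n₁ * n₂)) ≃ (ι → ZMod n₁) × (ι → ZMod n₂) :=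
    (Equiv.piCongrRight fun _ => crt.toEquiv).trans (Equiv.arrowProdEquivProdArrow _ _ _)
  have hunits₁ (a) : ((unitsEquiv a).1 : ZMod n₁) = (a : ZMod (n₁ * n₂)).cast :=
    ZMod.chineseRemainder_fst hco _
  have hunits₂ (a) : ((unitsEquiv a).2 : ZMod n₂) = (a : ZMod (n₁ * n₂)).cast :=
    ZMod.chineseRemainder_snd hco _
  have htuple₁ (b) : (tupleEquiv b).1 = fun i => (b i).cast :=
    funext fun _ => ZMod.chineseRemainder_fst hco _
  have htuple₂ (b) : (tupleEquiv b).2 = fun i => (b i).cast :=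
    funext fun _ => ZMod.chineseRemainder_snd hco _
  refine Fintype.sum_eq_mul_of_equiv_prod unitsEquiv fun a => ?_
  refine Fintype.sum_eq_mul_of_equiv_prod tupleEquiv fun b => ?_
  rw [gcdWithModulus_mul hco, hχ a, hunits₁, hunits₂, htuple₁, htuple₂,
    ZMod.cast_sub (dvd_mul_right n₁ n₂), ZMod.cast_sub (dvd_mul_left n₂ n₁),
    ZMod.cast_one (dvd_mul_right n₁ n₂), ZMod.cast_one (dvd_mul_left n₂ n₁), Nat.cast_mul]
  ring

end Menon

/-- Multiplicativity of the Menon-type sum `S_χ(n,k)`: if `n = n₁n₂` with `gcd(n₁,n₂) = 1`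
and `χ = χ₁·χ₂` under the CRT decomposition, then `S_χ(n,k) = S_{χ₁}(n₁,k) · S_{χ₂}(n₂,k)`. -/
theorem menon_sum_multiplicative (n₁ n₂ k : ℕ) [NeZero n₁] [NeZero n₂]
    (hco : Nat.Coprime n₁ n₂)
    (χ : DirichletCharacter ℂ (n₁ * n₂)) (χ₁ : DirichletCharacter ℂ n₁)
    (χ₂ : DirichletCharacter ℂ n₂)
    (hdec : ∀ c : ℕ, Nat.Coprime c (n₁ * n₂) →
      χ (c : ZMod (n₁ * n₂)) = χ₁ (c : ZMod n₁) * χ₂ (c : ZMod n₂)) :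
    ∑ a : (ZMod (n₁ * n₂))ˣ, ∑ b : Fin k → ZMod (n₁ * n₂),
      (Nat.gcd ((a : ZMod (n₁ * n₂)) - 1).val
        (Nat.gcd (Finset.univ.gcd fun i => (b i).val) (n₁ * n₂)) : ℂ) * χ a =
    (∑ a : (ZMod n₁)ˣ, ∑ b : Fin k → ZMod n₁,
      (Nat.gcd ((a : ZMod n₁) - 1).val
        (Nat.gcd (Finset.univ.gcd fun i => (b i).val) n₁) : ℂ) * χ₁ a) *
    (∑ a : (ZMod n₂)ˣ, ∑ b : Fin k → ZMod n₂,
      (Nat.gcd ((a : ZMod n₂) - 1).val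
        (Nat.gcd (Finset.univ.gcd fun i => (b i).val) n₂) : ℂ) * χ₂ a) :=
  Menon.menonSum_mul (ι := Fin k) hco (Menon.apply_units_eq_mul_of_natCast hdec)
end

section
/- Let n be a positive integer, k ≥ 0, and χ the trivial (principal) Dirichlet character modulo n. Then ∑_{a ∈ (Z/nZ)*} ∑_{b₁,...,b_k ∈ Z/nZ} gcd(a-1, b₁, ..., b_k, n)·χ(a) = φ(n)·σ_k(n), i.e., the main identity recovers Sury's identity since the trivial character has conductor 1. -/
/-!
Write `gcd(a - 1, b₁, …, b_k, n) = ∑_{d ∣ gcd} φ(d)` and swap the sums: the term of a divisor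
`d ∣ n` is `φ(d)` times the number of units `a ≡ 1 (mod d)` times the number of tuples `b ≡ 0
(mod d)`. These are fibres of the surjective reductions `(ℤ/n)ˣ → (ℤ/d)ˣ` and `ℤ/n → ℤ/d`, so
they number `φ(n)/φ(d)` and `(n/d)^k`, and the sum becomes `φ(n) ∑_{d ∣ n} (n/d)^k = φ(n) σ_k(n)`.
-/

open Finset
open scoped Nat

@[to_additive AddMonoidHom.card_filter_eq_zero_mul_card_of_surjective]
theorem MonoidHom.card_filter_eq_one_mul_card_of_surjective {G H : Type*} [Group G] [Fintype G]
    [Group H] [Fintype H] [DecidableEq H] (f : G →* H) (hf : Function.Surjective f) :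
    #{g | f g = 1} * Fintype.card H = Fintype.card G := by
  have hker : Nat.card f.ker = #{g | f g = 1} :=
    (Nat.card_congr (Equiv.subtypeEquivRight fun _ => f.mem_ker)).trans
      (Nat.card_eq_fintype_card.trans (Fintype.card_subtype _))
  have := f.ker.card_mul_index
  rwa [Subgroup.index_ker, f.range_eq_top.2 hf, Subgroup.card_top, hker, Nat.card_eq_fintype_card,
    Nat.card_eq_fintype_card] at this

theorem Fintype.card_filter_forall_apply {α ι : Type*} [Fintype α] [Fintype ι] [DecidableEq ι]
    (p : α → Prop) [DecidablePred p] :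
    #{b : ι → α | ∀ i, p (b i)} = #{x | p x} ^ Fintype.card ι := by
  have : ({b : ι → α | ∀ i, p (b i)} : Finset _) = Fintype.piFinset fun _ => {x | p x} := by
    ext; simp
  rw [this, Fintype.card_piFinset, prod_const, card_univ]

theorem Nat.gcd_gcd_eq_sum_totient {n : ℕ} (hn : n ≠ 0) (x y : ℕ) :
    Nat.gcd x (Nat.gcd y n) = ∑ d ∈ n.divisors with d ∣ x ∧ d ∣ y, φ d := by
  rw [← Nat.sum_totient (Nat.gcd x (Nat.gcd y n))]
  congr 1
  ext d
  simp only [Nat.mem_divisors, mem_filter, Nat.dvd_gcd_iff, ne_eq, Nat.gcd_eq_zero_iff, hn,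
    and_false, not_false_eq_true, and_true]
  tauto

theorem Nat.sum_sum_gcd_gcd_eq_sum_totient_mul {α β : Type*} [Fintype α] [Fintype β] {n : ℕ}
    (hn : n ≠ 0) (A : α → ℕ) (B : β → ℕ) :
    ∑ a, ∑ b, Nat.gcd (A a) (Nat.gcd (B b) n) =
      ∑ d ∈ n.divisors, φ d * #{a | d ∣ A a} * #{b | d ∣ B b} := by
  calc ∑ a, ∑ b, Nat.gcd (A a) (Nat.gcd (B b) n)
      = ∑ a, ∑ b, ∑ d ∈ n.divisors, if d ∣ A a ∧ d ∣ B b then φ d else 0 := by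
        simp_rw [Nat.gcd_gcd_eq_sum_totient hn, sum_filter]
    _ = ∑ d ∈ n.divisors, ∑ a, ∑ b, if d ∣ A a ∧ d ∣ B b then φ d else 0 :=
        (sum_congr rfl fun _ _ => sum_comm).trans sum_comm
    _ = ∑ d ∈ n.divisors, φ d * #{a | d ∣ A a} * #{b | d ∣ B b} := by
        refine sum_congr rfl fun d _ => ?_
        simp only [ite_and, sum_ite_irrel, sum_ite, sum_const, smul_eq_mul]
        ring

namespace ZMod

variable {n d : ℕ} [NeZero n]

theorem castHom_eq_zero_iff (hd : d ∣ n) (x : ZMod n) :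
    castHom hd (ZMod d) x = 0 ↔ d ∣ x.val := by
  rw [castHom_apply, ← natCast_val, natCast_eq_zero_iff]

theorem card_filter_dvd_val (hd : d ∣ n) : #{x : ZMod n | d ∣ x.val} = n / d := by
  have : NeZero d := ⟨ne_zero_of_dvd_ne_zero (NeZero.ne n) hd⟩
  have := (castHom hd (ZMod d)).toAddMonoidHom.card_filter_eq_zero_mul_card_of_surjective
    (castHom_surjective hd)
  simp only [RingHom.toAddMonoidHom_eq_coe, AddMonoidHom.coe_coe, castHom_eq_zero_iff,
    ZMod.card] at this
  exact Nat.eq_div_of_mul_eq_left (NeZero.ne d) this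

theorem card_filter_dvd_gcd_val {ι : Type*} [Fintype ι] [DecidableEq ι] (hd : d ∣ n) :
    #{b : ι → ZMod n | d ∣ univ.gcd fun i => (b i).val} = (n / d) ^ Fintype.card ι := by
  rw [← card_filter_dvd_val hd, ← Fintype.card_filter_forall_apply]
  congr 2 with b
  simp [Finset.dvd_gcd_iff]

theorem card_units_filter_dvd_val_sub_one_mul_totient (hd : d ∣ n) :
    #{a : (ZMod n)ˣ | d ∣ ((a : ZMod n) - 1).val} * φ d = φ n := by
  have : NeZero d := ⟨ne_zero_of_dvd_ne_zero (NeZero.ne n) hd⟩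
  have := (unitsMap hd).card_filter_eq_one_mul_card_of_surjective (unitsMap_surjective hd)
  rw [card_units_eq_totient, card_units_eq_totient] at this
  convert this using 4 with a
  rw [Units.ext_iff, ← sub_eq_zero, ← castHom_eq_zero_iff hd]
  simp [unitsMap_def, cast_sub hd, cast_one hd]

theorem sum_units_sum_gcd_sub_one_eq_totient_mul_sigma (k : ℕ) :
    ∑ a : (ZMod n)ˣ, ∑ b : Fin k → ZMod n,
      Nat.gcd ((a : ZMod n) - 1).val (Nat.gcd (univ.gcd fun i => (b i).val) n) =
      φ n * ArithmeticFunction.sigma k n := by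
  rw [Nat.sum_sum_gcd_gcd_eq_sum_totient_mul (NeZero.ne n), ArithmeticFunction.sigma_apply,
    ← Nat.sum_div_divisors n (· ^ k), mul_sum]
  refine sum_congr rfl fun d hd => ?_
  have hdn := Nat.dvd_of_mem_divisors hd
  rw [mul_comm (φ d), card_units_filter_dvd_val_sub_one_mul_totient hdn,
    card_filter_dvd_gcd_val hdn, Fintype.card_fin]

end ZMod

/-- For the trivial (principal) Dirichlet character mod `n`, the main identity recovers
Sury's identity: `∑_{a,b₁,…,b_k} gcd(a-1, b₁, …, b_k, n) · χ(a) = φ(n) · σ_k(n)`. -/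
theorem menon_trivial_character (n k : ℕ) [NeZero n]
    (χ : DirichletCharacter ℂ n) (hχ : χ = 1) :
    ∑ a : (ZMod n)ˣ, ∑ b : Fin k → ZMod n,
      (Nat.gcd ((a : ZMod n) - 1).val
        (Nat.gcd (Finset.univ.gcd fun i => (b i).val) n) : ℂ) * χ a =
      (Nat.totient n * ArithmeticFunction.sigma k n : ℕ) := by
  subst hχ
  simp only [MulChar.one_apply (Units.isUnit _), mul_one]
  exact_mod_cast ZMod.sum_units_sum_gcd_sub_one_eq_totient_mul_sigma k
end
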